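/- Let A, A_z be real symmetric positive definite 3×3 matrices, S a real 3×3 matrix such that I + (A_z − A)·S·A⁻¹ is invertible, and set Q_z := (β_z + 2I)⁻¹β_z with β_z := A^{-1/2}(A_z − A)A^{-1/2}. Then the matrix identity (I + (A_z − A)·S·A⁻¹)⁻¹·(A_z − A) = 2·A^{1/2}·(I − Q_z + 2Q_z·A^{1/2}·S·A^{-1/2})⁻¹·Q_z·A^{1/2} holds (whenever the right-hand side inverse exists). -/

import Mathlib

/-!
Write `R = A^{1/2}` and `D = A_z - A`. Since `R⁻¹ A R⁻¹ = I`, one has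
`β_z + 2I = R⁻¹ (A_z + A) R⁻¹`, hence `Q_z = R (A_z + A)⁻¹ D R⁻¹` and
`I - Q_z + 2 Q_z R S R⁻¹ = 2 R (A_z + A)⁻¹ (A + D S) R⁻¹`. Inverting this, the conjugations by
`R` and `A_z + A` cancel and the right-hand side becomes `A (A + D S)⁻¹ D`, which is also the
left-hand side because `I + D S A⁻¹ = (A + D S) A⁻¹`.
-/

open Matrix

/-- The square root of a positive semidefinite matrix, as defined in the older Mathlib. -/
noncomputable def Matrix.PosSemidef.sqrt {n 𝕜 : Type*} [Fintype n] [DecidableEq n] [RCLike 𝕜]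
    [PartialOrder 𝕜] [StarOrderedRing 𝕜]
    {A : Matrix n n 𝕜} (hA : A.PosSemidef) : Matrix n n 𝕜 :=
  hA.1.eigenvectorUnitary.1 * diagonal (fun i => ((Real.sqrt (hA.1.eigenvalues i) : ℝ) : 𝕜)) *
    (star hA.1.eigenvectorUnitary : Matrix n n 𝕜)

namespace Matrix

open scoped ComplexOrder

variable {n K : Type*} [Fintype n] [DecidableEq n]

theorem PosSemidef.sqrt_mul_sqrt {𝕜 : Type*} [RCLike 𝕜]
    {A : Matrix n n 𝕜} (hA : A.PosSemidef) : hA.sqrt * hA.sqrt = A := by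
  set U : Matrix n n 𝕜 := hA.1.eigenvectorUnitary.1
  set Λ : Matrix n n 𝕜 := diagonal fun i => ((Real.sqrt (hA.1.eigenvalues i) : ℝ) : 𝕜)
  have hUU : star U * U = 1 := Unitary.star_mul_self_of_mem hA.1.eigenvectorUnitary.2
  have hΛΛ : Λ * Λ = diagonal (RCLike.ofReal ∘ hA.1.eigenvalues) := by
    simp only [Λ, diagonal_mul_diagonal, ← RCLike.ofReal_mul,
      Real.mul_self_sqrt (hA.eigenvalues_nonneg _)]
    rfl
  calc hA.sqrt * hA.sqrt = U * (Λ * Λ) * star U := by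
        simp only [PosSemidef.sqrt, mul_assoc]
        rw [← mul_assoc (star U) U, hUU, one_mul]
    _ = A := by rw [hΛΛ]; conv_rhs => rw [hA.1.spectral_theorem, Unitary.conjStarAlgAut_apply]

theorem PosDef.isUnit_det_sqrt {𝕜 : Type*} [RCLike 𝕜] {A : Matrix n n 𝕜} (hA : A.PosDef) :
    IsUnit hA.posSemidef.sqrt.det := by
  have h : IsUnit (hA.posSemidef.sqrt.det * hA.posSemidef.sqrt.det) := by
    rw [← det_mul, hA.posSemidef.sqrt_mul_sqrt, ← isUnit_iff_isUnit_det]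
    exact hA.isUnit
  exact isUnit_of_mul_isUnit_left h

-- Unconditional: for singular `A` both sides are the junk value `0`.
theorem inv_smul₀ [Field K] (k : K) (A : Matrix n n K) : (k • A)⁻¹ = k⁻¹ • A⁻¹ := by
  rcases eq_or_ne k 0 with rfl | hk
  · simp
  by_cases hA : IsUnit A.det
  · exact inv_smul' A (Units.mk0 k hk) hA
  · have hkA : ¬IsUnit (k • A).det := by
      rw [isUnit_iff_ne_zero, not_not] at hA ⊢
      rw [det_smul, hA, mul_zero]
    rw [nonsing_inv_apply_not_isUnit _ hA, nonsing_inv_apply_not_isUnit _ hkA, smul_zero]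

section CommRing

variable [CommRing K] {A B D E R S : Matrix n n K}

theorem inv_one_add_mul_inv_mul (hA : IsUnit A.det) :
    (1 + D * S * A⁻¹)⁻¹ * D = A * (A + D * S)⁻¹ * D := by
  rw [show 1 + D * S * A⁻¹ = (A + D * S) * A⁻¹ by rw [add_mul, mul_nonsing_inv _ hA],
    mul_inv_rev, nonsing_inv_nonsing_inv _ hA]

theorem inv_mul_sq_mul_inv (hR : IsUnit R.det) : R⁻¹ * (R * R) * R⁻¹ = 1 := by
  rw [mul_assoc, mul_assoc, mul_nonsing_inv _ hR, mul_one, nonsing_inv_mul _ hR]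

theorem inv_conj_sub_add_two_inv_mul (hR : IsUnit R.det) (hRR : R * R = A) :
    (R⁻¹ * (B - A) * R⁻¹ + 2)⁻¹ * (R⁻¹ * (B - A) * R⁻¹) = R * (B + A)⁻¹ * (B - A) * R⁻¹ := by
  have hsum : R⁻¹ * (B - A) * R⁻¹ + 2 = R⁻¹ * (B + A) * R⁻¹ := by
    calc R⁻¹ * (B - A) * R⁻¹ + 2 = R⁻¹ * (B - A) * R⁻¹ + 2 * (R⁻¹ * (R * R) * R⁻¹) := by
          rw [inv_mul_sq_mul_inv hR, mul_one]
      _ = R⁻¹ * (B + A) * R⁻¹ := by rw [hRR]; noncomm_ring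
  rw [hsum, mul_inv_rev, mul_inv_rev, nonsing_inv_nonsing_inv _ hR]
  simp only [mul_assoc, mul_nonsing_inv_cancel_left _ _ hR]

theorem one_sub_add_smul_conj (hR : IsUnit R.det) (hE : IsUnit E.det) (c : K) :
    1 - R * E⁻¹ * D * R⁻¹ + c • (R * E⁻¹ * D * R⁻¹ * R * S * R⁻¹)
      = R * E⁻¹ * (E - D + c • (D * S)) * R⁻¹ := by
  have hone : (1 : Matrix n n K) = R * E⁻¹ * E * R⁻¹ := by
    rw [mul_assoc R, nonsing_inv_mul _ hE, mul_one, mul_nonsing_inv _ hR]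
  have hQR : R * E⁻¹ * D * R⁻¹ * R = R * E⁻¹ * D := by
    rw [mul_assoc _ R⁻¹, nonsing_inv_mul _ hR, mul_one]
  rw [hQR, hone]
  simp only [mul_sub, sub_mul, mul_add, add_mul, mul_smul_comm, smul_mul_assoc, mul_assoc]

end CommRing

theorem smul_mul_inv_conj_mul [Field K] {A D E R X : Matrix n n K} (hR : IsUnit R.det)
    (hRR : R * R = A) (hE : IsUnit E.det) {c : K} (hc : c ≠ 0) :
    c • (R * (R * E⁻¹ * (c • X) * R⁻¹)⁻¹ * (R * E⁻¹ * D * R⁻¹) * R) = A * X⁻¹ * D := by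
  rw [mul_inv_rev, mul_inv_rev, mul_inv_rev, nonsing_inv_nonsing_inv _ hR,
    nonsing_inv_nonsing_inv _ hE, inv_smul₀]
  simp only [mul_assoc, smul_mul_assoc, mul_smul_comm, smul_smul, nonsing_inv_mul_cancel_left _ _ hR,
    mul_nonsing_inv_cancel_left _ _ hE, nonsing_inv_mul _ hR, mul_one, mul_inv_cancel₀ hc, one_smul]
  rw [← mul_assoc R, hRR]

end Matrix

theorem polarization_tensor_two_forms_general
    (A Az S : Matrix (Fin 3) (Fin 3) ℝ)
    (hA : A.PosDef) (hAz : Az.PosDef)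
    (βz Qz : Matrix (Fin 3) (Fin 3) ℝ)
    (hβz : βz = (hA.posSemidef.sqrt)⁻¹ * (Az - A) * (hA.posSemidef.sqrt)⁻¹)
    (hQz : Qz = (βz + 2)⁻¹ * βz) :
    (1 + (Az - A) * S * A⁻¹)⁻¹ * (Az - A)
      = (2 : ℝ) • (hA.posSemidef.sqrt *
          (1 - Qz + (2 : ℝ) • (Qz * hA.posSemidef.sqrt * S * (hA.posSemidef.sqrt)⁻¹))⁻¹ *
          Qz * hA.posSemidef.sqrt) := by
  have hR := hA.isUnit_det_sqrt
  have hRR := hA.posSemidef.sqrt_mul_sqrt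
  have hE : IsUnit (Az + A).det := (hAz.add hA).det_pos.ne'.isUnit
  have hX : Az + A - (Az - A) + (2 : ℝ) • ((Az - A) * S) = (2 : ℝ) • (A + (Az - A) * S) := by
    module
  subst hQz hβz
  rw [inv_conj_sub_add_two_inv_mul hR hRR, one_sub_add_smul_conj hR hE, hX,
    smul_mul_inv_conj_mul hR hRR hE two_ne_zero, inv_one_add_mul_inv_mul hA.det_pos.ne'.isUnit]

/-- For real symmetric positive definite `3×3` matrices `A, A_z`, Eshelby-like tensor `S` with
`I + (A_z − A)·S·A⁻¹` invertible, `β_z := A^{-1/2}(A_z − A)A^{-1/2}`, `Q_z := (β_z+2I)⁻¹β_z`: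
`(I + (A_z − A)·S·A⁻¹)⁻¹·(A_z − A)
  = 2·A^{1/2}·(I − Q_z + 2Q_z·A^{1/2}·S·A^{-1/2})⁻¹·Q_z·A^{1/2}`,
whenever the right-hand side inverse exists. -/
theorem polarization_tensor_two_forms
    (A Az S : Matrix (Fin 3) (Fin 3) ℝ)
    (hA : A.PosDef) (hAz : Az.PosDef) (hAs : A.IsSymm) (hAzs : Az.IsSymm)
    (βz Qz : Matrix (Fin 3) (Fin 3) ℝ)
    (hβz : βz = (hA.posSemidef.sqrt)⁻¹ * (Az - A) * (hA.posSemidef.sqrt)⁻¹)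
    (hQz : Qz = (βz + 2)⁻¹ * βz)
    (hu1 : IsUnit (1 + (Az - A) * S * A⁻¹))
    (hu2 : IsUnit (1 - Qz + (2 : ℝ) • (Qz * hA.posSemidef.sqrt * S * (hA.posSemidef.sqrt)⁻¹))) :
    (1 + (Az - A) * S * A⁻¹)⁻¹ * (Az - A)
      = (2 : ℝ) • (hA.posSemidef.sqrt *
          (1 - Qz + (2 : ℝ) • (Qz * hA.posSemidef.sqrt * S * (hA.posSemidef.sqrt)⁻¹))⁻¹ *
          Qz * hA.posSemidef.sqrt) :=
  polarization_tensor_two_forms_general A Az S hA hAz βz Qz hβz hQz
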